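/- Let X be a set, f : X → X an acyclic function, t ≥ 1, s = 6t, r = 4s², H an r-forward-independent hitting set for f, and c_H : X → {0,1} the associated two-coloring with induced partition X = U_0 ⊔ U_1. Let ℓ(x) ≥ 1 be minimal with c_H(f^{ℓ(x)}(x)) ≠ c_H(x) and set e(x) = f^{s/3 + ℓ(x)}(x). If x, y ∈ U_i lie in the same F_t(U_i)-class, then there exists k ∈ ℕ with f^k(y) = e(x). -/

import Mathlib

set_option linter.unusedVariables false

def Acyclic {X : Type*} (f : X → X) : Prop := ∀ x : X, ∀ k : ℕ, 1 ≤ k → f^[k] x ≠ x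

def Hitting {X : Type*} (f : X → X) (H : Set X) : Prop :=
  ∀ x : X, ∃ k : ℕ, 1 ≤ k ∧ f^[k] x ∈ H

def FwdIndep {X : Type*} (f : X → X) (r : ℕ) (H : Set X) : Prop :=
  ∀ x ∈ H, ∀ k : ℕ, 1 ≤ k → f^[k] x ∈ H → r < k

def funGraph {X : Type*} (f : X → X) : SimpleGraph X where
  Adj x y := x ≠ y ∧ (f x = y ∨ f y = x)
  symm := ⟨fun x y h => ⟨h.1.symm, h.2.symm⟩⟩
  loopless := ⟨fun x h => h.1 rfl⟩

/-- `x` and `y` are reachable from one another and at graph distance at most `r`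
in the graph generated by `f`. -/
def distLE {X : Type*} (f : X → X) (r : ℕ) (x y : X) : Prop :=
  (funGraph f).Reachable x y ∧ (funGraph f).dist x y ≤ r

/-- The generating relation of the equivalence relation `F_t(U)`. -/
def classRel {X : Type*} (f : X → X) (t : ℕ) (U : Set X) : X → X → Prop :=
  fun a b => a ∈ U ∧ b ∈ U ∧ distLE f t a b

/-- The ball of radius `t` around `x` in the graph generated by `f`. -/
def ball {X : Type*} (f : X → X) (t : ℕ) (x : X) : Set X := {y | distLE f t x y}

/-- A directed path of length `k` from `u` to `w` in the digraph `E`. -/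
def DiPath {V : Type*} (E : V → V → Prop) (k : ℕ) (u w : V) : Prop :=
  ∃ p : ℕ → V, p 0 = u ∧ p k = w ∧ ∀ i < k, E (p i) (p (i+1))

/-- The digraph `D_r` on ℕ. -/
def Drel (r : ℕ) (k l : ℕ) : Prop := (0 < k ∧ l = k - 1) ∨ (k = 0 ∧ r ≤ l)

/-- A directed path of length `k` from `u` to `w` staying inside `A`. -/
def PathIn {V : Type*} (E : V → V → Prop) (A : Set V) (k : ℕ) (u w : V) : Prop :=
  ∃ p : ℕ → V, p 0 = u ∧ p k = w ∧ (∀ i ≤ k, p i ∈ A) ∧ ∀ i < k, E (p i) (p (i+1))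

/-- `A` is a strong connectivity component of the digraph `E`. -/
def IsSCC {V : Type*} (E : V → V → Prop) (A : Set V) : Prop :=
  (∀ v ∈ A, ∀ w ∈ A, ∃ k, PathIn E A k v w) ∧
  ∀ B : Set V, A ⊆ B → (∀ v ∈ B, ∀ w ∈ B, ∃ k, PathIn E B k v w) → B = A

/-!
In fact `e` is constant on each `F_t(U_i)`-class. The colour of a point depends only on its
hitting time `k` and its hitting point, and along an orbit it can change only where `k` crosses a
block boundary; consecutive boundaries are at least `s` apart. So if `f^[j] u` still has the
colour of `u` for some `j < s`, the first colour change of `u` comes after `j`, and `u` and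
`f^[j] u` have the same point `e`. Two points of `U_i` at distance at most `t` have orbits
meeting after `p` and `q` steps with `p + q ≤ t`. Stepping to a hitting point met on the way, or
along the longer branch, reduces to two points with equal hitting time and hitting point; their
colour sequences coincide, hence so do their first colour changes, and the `2 t` extra steps
absorb the remaining offset.
-/

open Function

theorem isLeast_of_forall_lt {P : ℕ → Prop} {n : ℕ} (hn : 1 ≤ n) (hP : P n)
    (hlt : ∀ j, 1 ≤ j → j < n → ¬ P j) : IsLeast {j | 1 ≤ j ∧ P j} n :=
  ⟨⟨hn, hP⟩, fun j ⟨hj, hPj⟩ => not_lt.mp fun h => hlt j hj h hPj⟩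

theorem IsLeast.not_of_lt {P : ℕ → Prop} {n j : ℕ} (h : IsLeast {i | 1 ≤ i ∧ P i} n)
    (hj : 1 ≤ j) (hjn : j < n) : ¬ P j :=
  fun hPj => (h.2 ⟨hj, hPj⟩).not_gt hjn

theorem IsLeast.sub_of_lt {P : ℕ → Prop} {n j : ℕ} (h : IsLeast {i | 1 ≤ i ∧ P i} n)
    (hjn : j < n) : IsLeast {i | 1 ≤ i ∧ P (i + j)} (n - j) :=
  ⟨⟨by omega, by rw [Nat.sub_add_cancel hjn.le]; exact h.1.2⟩,
    fun i ⟨hi, hPi⟩ => by have := h.2 ⟨by omega, hPi⟩; omega⟩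

theorem exists_le_lt_succ_of_lt (a : ℕ → ℕ) {n N : ℕ} (h0 : a 0 ≤ n) (hN : n < a N) :
    ∃ i < N, a i ≤ n ∧ n < a (i + 1) := by
  induction N with
  | zero => omega
  | succ N ih =>
    by_cases hle : a N ≤ n
    · exact ⟨N, N.lt_succ_self, hle, hN⟩
    · obtain ⟨i, hi, hlo, hhi⟩ := ih (not_le.mp hle)
      exact ⟨i, by omega, hlo, hhi⟩

theorem Nat.dvd_of_sub_one_div_ne {n s : ℕ} (hne : (n - 1) / s ≠ n / s) : s ∣ n := by
  rcases n.eq_zero_or_pos with rfl | hn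
  · exact dvd_zero s
  by_contra h
  have := @Nat.succ_div (n - 1) s
  rw [Nat.sub_add_cancel hn, if_neg h, add_zero] at this
  exact hne this.symm

theorem Nat.sub_div_eq_sub_one_div_of_dvd {n s i : ℕ} (hdvd : s ∣ n) (hi : 1 ≤ i) (his : i ≤ s) :
    (n - i) / s = (n - 1) / s := by
  obtain ⟨Q, rfl⟩ := hdvd
  rcases Q.eq_zero_or_pos with rfl | hQ
  · simp
  have hblock : ∀ x < s, (s * Q - (x + 1)) / s = Q - 1 := fun x hx => by
    rw [Nat.mul_sub_div x s Q (by nlinarith), Nat.div_eq_of_lt hx]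
  have := hblock (i - 1) (by omega)
  rw [Nat.sub_add_cancel hi] at this
  rw [this, hblock 0 (by omega)]

section Orbit

variable {X : Type*} {f : X → X}

theorem iterate_eq_of_iterate_eq {x y : X} {q n : ℕ} (h : f^[q] x = f^[q] y) (hqn : q ≤ n) :
    f^[n] x = f^[n] y := by
  obtain ⟨d, rfl⟩ := Nat.exists_eq_add_of_le hqn
  rw [add_comm, iterate_add_apply, h, ← iterate_add_apply]

theorem exists_iterate_eq_of_walk {x y : X} (w : (funGraph f).Walk x y) :
    ∃ p q, p + q ≤ w.length ∧ f^[p] x = f^[q] y := by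
  induction w with
  | nil => exact ⟨0, 0, le_rfl, rfl⟩
  | @cons x z y hadj w ih =>
    obtain ⟨p, q, hpq, heq⟩ := ih
    rw [SimpleGraph.Walk.length_cons]
    rcases hadj.2 with hxz | hzx
    · exact ⟨p + 1, q, by omega, by rw [iterate_succ_apply, hxz, heq]⟩
    · cases p with
      | zero => exact ⟨0, q + 1, by omega, by rw [iterate_succ_apply', ← heq, ← hzx]; rfl⟩
      | succ p => exact ⟨p, q, by omega, by rwa [iterate_succ_apply, hzx] at heq⟩

theorem distLE.exists_iterate_eq {t : ℕ} {x y : X} (h : distLE f t x y) :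
    ∃ p q, p + q ≤ t ∧ f^[p] x = f^[q] y := by
  obtain ⟨w, hw⟩ := h.1.exists_walk_length_eq_dist
  obtain ⟨p, q, hpq, heq⟩ := exists_iterate_eq_of_walk w
  exact ⟨p, q, by have := h.2; omega, heq⟩

end Orbit

section HitTime

variable {X : Type*} {f : X → X} {H : Set X} {k : X → ℕ}

theorem hitTime_iterate (hk : ∀ x, IsLeast {j | 1 ≤ j ∧ f^[j] x ∈ H} (k x)) {x : X} {j : ℕ}
    (hj : j < k x) : k (f^[j] x) = k x - j :=
  (hk (f^[j] x)).unique (by simpa only [iterate_add_apply] using (hk x).sub_of_lt hj)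

theorem iterate_hitTime_iterate (hk : ∀ x, IsLeast {j | 1 ≤ j ∧ f^[j] x ∈ H} (k x)) {x : X}
    {j : ℕ} (hj : j < k x) : f^[k (f^[j] x)] (f^[j] x) = f^[k x] x := by
  rw [hitTime_iterate hk hj, ← iterate_add_apply, Nat.sub_add_cancel hj.le]

theorem hitTime_sub_eq_and_iterate_hitTime_eq (hk : ∀ x, IsLeast {j | 1 ≤ j ∧ f^[j] x ∈ H} (k x))
    {u v : X} {p q : ℕ} (heq : f^[p] u = f^[q] v) (hp : p < k u) (hq : q < k v) :
    k u - p = k v - q ∧ f^[k u] u = f^[k v] v := by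
  refine ⟨?_, ?_⟩
  · rw [← hitTime_iterate hk hp, ← hitTime_iterate hk hq, heq]
  · rw [← iterate_hitTime_iterate hk hp, ← iterate_hitTime_iterate hk hq, heq]

end HitTime

def FlipSeparated {X : Type*} (f : X → X) (c : X → ℕ) (s : ℕ) : Prop :=
  ∀ z, c (f z) ≠ c z → ∀ i, 1 ≤ i → i < s → c (f^[i] z) = c (f z)

-- The colouring `c_H` of Proposition 5.5: `k` is the hitting time of `H`, and the intervals
-- `[a i, a (i + 1))`, `i ≤ 2 * m`, partition `{0, …, r / 2 - 1}` into blocks of length at least `s`.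
structure IsBlockColoring {X : Type*} (f : X → X) (k : X → ℕ) (s r m : ℕ) (a : ℕ → ℕ)
    (c : X → ℕ) : Prop where
  a_zero : a 0 = 0
  a_top : a (2 * m + 1) = r / 2
  add_le_a_succ : ∀ i ≤ 2 * m, a i + s ≤ a (i + 1)
  color_cases : ∀ x, c x = 0 ∨ c x = 1
  color_of_le : ∀ x, r / 2 ≤ k x → c x = k x / s % 2
  color_of_hit_zero : ∀ x, k x < r / 2 → c (f^[k x] x) = 0 → c x = k x / s % 2
  color_of_hit_one : ∀ x, k x < r / 2 → c (f^[k x] x) = 1 →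
    ∀ i ≤ 2 * m, a i ≤ k x → k x < a (i + 1) → c x = (i + 1) % 2

namespace IsBlockColoring

variable {X : Type*} {f : X → X} {k : X → ℕ} {s r m : ℕ} {a : ℕ → ℕ} {c : X → ℕ}

theorem a_mono (hc : IsBlockColoring f k s r m a c) {i j : ℕ} (hij : i ≤ j) (hj : j ≤ 2 * m + 1) :
    a i ≤ a j := by
  induction hij with
  | refl => exact le_rfl
  | @step n hle ih =>
    have := hc.add_le_a_succ n (by omega)
    exact (ih (by omega)).trans (by omega : a n ≤ a (n + 1))

theorem le_a_one (hc : IsBlockColoring f k s r m a c) : s ≤ a 1 := by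
  simpa [hc.a_zero] using hc.add_le_a_succ 0 (Nat.zero_le _)

theorem le_half (hc : IsBlockColoring f k s r m a c) : s ≤ r / 2 :=
  hc.a_top ▸ hc.le_a_one.trans (hc.a_mono (by omega) le_rfl)

theorem exists_block (hc : IsBlockColoring f k s r m a c) {n : ℕ} (hn : n < r / 2) :
    ∃ i ≤ 2 * m, a i ≤ n ∧ n < a (i + 1) := by
  obtain ⟨i, hi, hlo, hhi⟩ :=
    exists_le_lt_succ_of_lt a (by rw [hc.a_zero]; exact n.zero_le) (hc.a_top ▸ hn)
  exact ⟨i, by omega, hlo, hhi⟩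

theorem color_eq_div (hc : IsBlockColoring f k s r m a c) {x : X}
    (h : c (f^[k x] x) = 0 ∨ r / 2 ≤ k x) : c x = k x / s % 2 := by
  by_cases hx : r / 2 ≤ k x
  · exact hc.color_of_le x hx
  · exact hc.color_of_hit_zero x (by omega) (h.resolve_right hx)

theorem color_eq_of_hitTime_eq (hc : IsBlockColoring f k s r m a c) {x y : X} (hkxy : k x = k y)
    (hh : f^[k x] x = f^[k y] y) : c x = c y := by
  by_cases h : c (f^[k x] x) = 0 ∨ r / 2 ≤ k x
  · rw [hc.color_eq_div h, hc.color_eq_div (by rwa [← hh, ← hkxy]), hkxy]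
  · rw [not_or, not_le] at h
    have h1 := (hc.color_cases _).resolve_left h.1
    obtain ⟨i, hi, hlo, hhi⟩ := hc.exists_block h.2
    rw [hc.color_of_hit_one x h.2 h1 i hi hlo hhi,
      hc.color_of_hit_one y (by omega) (by rwa [← hh]) i hi (by omega) (by omega)]

theorem color_eq_of_hitTime_lt (hc : IsBlockColoring f k s r m a c) {x : X} (hx : k x < s) :
    c x = c (f^[k x] x) := by
  have hs := hc.le_half
  rcases hc.color_cases (f^[k x] x) with h0 | h1
  · rw [hc.color_eq_div (Or.inl h0), Nat.div_eq_of_lt hx, h0]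
  · rw [hc.color_of_hit_one x (by omega) h1 0 (Nat.zero_le _) (by rw [hc.a_zero]; omega)
      (hx.trans_le hc.le_a_one), h1]

end IsBlockColoring

section Coloring

variable {X : Type*} {f : X → X} {H : Set X} {k : X → ℕ} {s r m : ℕ} {a : ℕ → ℕ} {c : X → ℕ}

theorem color_iterate_eq_div (hk : ∀ x, IsLeast {j | 1 ≤ j ∧ f^[j] x ∈ H} (k x))
    (hc : IsBlockColoring f k s r m a c) {z : X} {j : ℕ} (hj : j < k z)
    (h : c (f^[k z] z) = 0 ∨ r / 2 ≤ k z - j) : c (f^[j] z) = (k z - j) / s % 2 := by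
  rw [hc.color_eq_div (by rwa [iterate_hitTime_iterate hk hj, hitTime_iterate hk hj]),
    hitTime_iterate hk hj]

theorem color_iterate_eq_block (hk : ∀ x, IsLeast {j | 1 ≤ j ∧ f^[j] x ∈ H} (k x))
    (hc : IsBlockColoring f k s r m a c) {z : X} {j i : ℕ} (hj : j < k z)
    (h1 : c (f^[k z] z) = 1) (hr : k z - j < r / 2) (hi : i ≤ 2 * m) (hlo : a i ≤ k z - j)
    (hhi : k z - j < a (i + 1)) : c (f^[j] z) = (i + 1) % 2 := by
  rw [← hitTime_iterate hk hj] at hr hlo hhi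
  exact hc.color_of_hit_one _ hr (by rwa [iterate_hitTime_iterate hk hj]) i hi hlo hhi

theorem color_iterate_eq_of_hitTime_eq (hk : ∀ x, IsLeast {j | 1 ≤ j ∧ f^[j] x ∈ H} (k x))
    (hc : IsBlockColoring f k s r m a c) {x y : X} (hkxy : k x = k y)
    (hh : f^[k x] x = f^[k y] y) (d : ℕ) : c (f^[d] x) = c (f^[d] y) := by
  rcases lt_or_ge d (k x) with hd | hd
  · have hd' : d < k y := hkxy ▸ hd
    exact hc.color_eq_of_hitTime_eq
      (by rw [hitTime_iterate hk hd, hitTime_iterate hk hd', hkxy])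
      (by rw [iterate_hitTime_iterate hk hd, iterate_hitTime_iterate hk hd', hh])
  · rw [hkxy] at hh hd
    rw [iterate_eq_of_iterate_eq hh hd]

theorem le_hitTime_of_color_ne (hk : ∀ x, IsLeast {j | 1 ≤ j ∧ f^[j] x ∈ H} (k x))
    (hc : IsBlockColoring f k s r m a c) {z : X} (hflip : c (f z) ≠ c z) : s ≤ k z := by
  by_contra! hz
  apply hflip
  rw [hc.color_eq_of_hitTime_lt hz]
  change c (f^[1] z) = _
  rcases (hk z).1.1.eq_or_lt with h | h
  · rw [h]
  · rw [← iterate_hitTime_iterate hk h]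
    exact hc.color_eq_of_hitTime_lt (by rw [hitTime_iterate hk h]; omega)

theorem flipSeparated (hk : ∀ x, IsLeast {j | 1 ≤ j ∧ f^[j] x ∈ H} (k x))
    (hc : IsBlockColoring f k s r m a c) (hsr : s ∣ r / 2) : FlipSeparated f c s := by
  intro z hflip i hi his
  have hsz := le_hitTime_of_color_ne hk hc hflip
  change c (f^[1] z) ≠ c (f^[0] z) at hflip
  change c (f^[i] z) = c (f^[1] z)
  by_cases h : c (f^[k z] z) = 0 ∨ r / 2 ≤ k z - 1
  · have hdvd : s ∣ k z := Nat.dvd_of_sub_one_div_ne fun he => hflip <| by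
      rw [color_iterate_eq_div hk hc (j := 1) (by omega) h,
        color_iterate_eq_div hk hc (j := 0) (by omega) (h.imp_right (by omega)), he, Nat.sub_zero]
    -- `k z` and `r / 2` are both multiples of `s`, so `k z - i` cannot drop below `r / 2`
    have hi' : c (f^[k z] z) = 0 ∨ r / 2 ≤ k z - i := h.imp_right fun hr => by
      have := Nat.le_of_dvd (by omega) (Nat.dvd_sub hdvd hsr)
      omega
    rw [color_iterate_eq_div hk hc (by omega) hi', color_iterate_eq_div hk hc (by omega) h,
      Nat.sub_div_eq_sub_one_div_of_dvd hdvd hi his.le]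
  · rw [not_or, not_le] at h
    have h1 := (hc.color_cases _).resolve_left h.1
    obtain ⟨j, hj, hlo, hhi⟩ := hc.exists_block h.2
    have hstep := hc.add_le_a_succ j hj
    have hboundary : a (j + 1) ≤ k z := by
      by_contra! hlt
      have := hc.a_top ▸ hc.a_mono (by omega : j + 1 ≤ 2 * m + 1) le_rfl
      exact hflip (by rw [color_iterate_eq_block hk hc (j := 1) (by omega) h1 h.2 hj hlo hhi,
        color_iterate_eq_block hk hc (j := 0) (by omega) h1 (by omega) hj (by omega) (by omega)])
    rw [color_iterate_eq_block hk hc (by omega) h1 (by omega) hj (by omega) (by omega),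
      color_iterate_eq_block hk hc (by omega) h1 h.2 hj hlo hhi]

end Coloring

section FlipTime

variable {X : Type*} {f : X → X} {c : X → ℕ} {L : X → ℕ} {s : ℕ}

theorem flipTime_eq_add (hL : ∀ x, IsLeast {j | 1 ≤ j ∧ c (f^[j] x) ≠ c x} (L x))
    (hsep : FlipSeparated f c s) {u : X} {j : ℕ} (hj : j < s) (hcj : c (f^[j] u) = c u) :
    L u = j + L (f^[j] u) := by
  have hL1 := (hL u).1.1
  have hjL : j < L u := by
    by_contra! hLj
    have hz : c (f^[L u - 1] u) = c u := by
      rcases (L u - 1).eq_zero_or_pos with h | h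
      · rw [h, iterate_zero_apply]
      · exact not_not.mp ((hL u).not_of_lt h (by omega))
    have hfz : f (f^[L u - 1] u) = f^[L u] u := by
      rw [← iterate_succ_apply' f, Nat.succ_eq_add_one, Nat.sub_add_cancel hL1]
    have := hsep _ (by rw [hfz, hz]; exact (hL u).1.2) (j - L u + 1) (by omega) (by omega)
    rw [hfz, ← iterate_add_apply, show j - L u + 1 + (L u - 1) = j by omega, hcj] at this
    exact (hL u).1.2 this.symm
  have hshift : L (f^[j] u) = L u - j :=
    (hL _).unique (by simpa only [iterate_add_apply, hcj] using (hL u).sub_of_lt hjL)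
  omega

theorem iterate_add_flipTime_iterate (hL : ∀ x, IsLeast {j | 1 ≤ j ∧ c (f^[j] x) ≠ c x} (L x))
    (hsep : FlipSeparated f c s) {u : X} {j : ℕ} (hj : j < s) (hcj : c (f^[j] u) = c u)
    (n : ℕ) : f^[n + L (f^[j] u)] (f^[j] u) = f^[n + L u] u := by
  rw [flipTime_eq_add hL hsep hj hcj, ← iterate_add_apply, add_assoc, add_comm j]

theorem flipTime_eq_of_color_iterate_eq (hL : ∀ x, IsLeast {j | 1 ≤ j ∧ c (f^[j] x) ≠ c x} (L x))
    {x y : X} (h : ∀ d, c (f^[d] x) = c (f^[d] y)) : L x = L y :=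
  have h0 : c x = c y := h 0
  (hL x).unique (by simpa only [h, h0] using hL y)

end FlipTime

section Merge

variable {X : Type*} {f : X → X} {H : Set X} {k : X → ℕ} {s r m : ℕ} {a : ℕ → ℕ} {c : X → ℕ}
  {L : X → ℕ}

theorem iterate_add_flipTime_eq_of_lt_hitTime
    (hk : ∀ x, IsLeast {j | 1 ≤ j ∧ f^[j] x ∈ H} (k x)) (hc : IsBlockColoring f k s r m a c)
    (hsr : s ∣ r / 2) (hL : ∀ x, IsLeast {j | 1 ≤ j ∧ c (f^[j] x) ≠ c x} (L x))
    {u v : X} {p q n : ℕ} (hcol : c u = c v) (heq : f^[p] u = f^[q] v) (hpu : p < k u)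
    (hqv : q < k v) (hqp : q ≤ p) (hpqn : p + q ≤ n) (hns : n < s) :
    f^[n + L u] u = f^[n + L v] v := by
  set w := f^[p - q] u
  have hwv : f^[q] w = f^[q] v := by rw [← iterate_add_apply, Nat.add_sub_cancel' hqp, heq]
  have hqw : q < k w := by rw [hitTime_iterate hk (by omega)]; omega
  obtain ⟨hkwv, hhit⟩ := hitTime_sub_eq_and_iterate_hitTime_eq hk hwv hqw hqv
  have hcolors := color_iterate_eq_of_hitTime_eq hk hc (by omega) hhit
  have hcw : c w = c u := (hcolors 0).trans hcol.symm
  rw [← iterate_add_flipTime_iterate hL (flipSeparated hk hc hsr) (j := p - q) (by omega) hcw,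
    flipTime_eq_of_color_iterate_eq hL hcolors]
  exact iterate_eq_of_iterate_eq hwv (by omega)

theorem iterate_add_flipTime_eq_of_iterate_eq
    (hk : ∀ x, IsLeast {j | 1 ≤ j ∧ f^[j] x ∈ H} (k x)) (hc : IsBlockColoring f k s r m a c)
    (hsr : s ∣ r / 2) (hL : ∀ x, IsLeast {j | 1 ≤ j ∧ c (f^[j] x) ≠ c x} (L x))
    {u v : X} {p q n : ℕ} (hcol : c u = c v) (heq : f^[p] u = f^[q] v) (hpqn : p + q ≤ n)
    (hns : n < s) : f^[n + L u] u = f^[n + L v] v := by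
  induction hN : p + q using Nat.strong_induction_on generalizing u v p q with
  | _ N ih =>
  have hsep := flipSeparated hk hc hsr
  by_cases hu : k u ≤ p
  · have hcu : c (f^[k u] u) = c u := (hc.color_eq_of_hitTime_lt (by omega)).symm
    rw [← iterate_add_flipTime_iterate hL hsep (by omega) hcu]
    refine ih (p - k u + q) (by have := (hk u).1.1; omega) (hcu.trans hcol) ?_ (by omega) rfl
    rw [← iterate_add_apply, Nat.sub_add_cancel hu, heq]
  by_cases hv : k v ≤ q
  · have hcv : c (f^[k v] v) = c v := (hc.color_eq_of_hitTime_lt (by omega)).symm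
    rw [← iterate_add_flipTime_iterate hL hsep (by omega) hcv]
    refine ih (p + (q - k v)) (by have := (hk v).1.1; omega) (hcol.trans hcv.symm) ?_ (by omega) rfl
    rw [← iterate_add_apply, Nat.sub_add_cancel hv, heq]
  rw [not_le] at hu hv
  rcases le_total q p with hqp | hpq
  · exact iterate_add_flipTime_eq_of_lt_hitTime hk hc hsr hL hcol heq hu hv hqp hpqn hns
  · exact (iterate_add_flipTime_eq_of_lt_hitTime hk hc hsr hL hcol.symm heq.symm hv hu hpq
      (by omega) hns).symm

end Merge

theorem stmt19_general {X : Type*} (f : X → X) (t : ℕ) (ht : 1 ≤ t)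
    (s r : ℕ) (hs : s = 6*t) (hrr : r = 4*s^2)
    (H : Set X)
    (k : X → ℕ)
    (hk : ∀ x, 1 ≤ k x ∧ f^[k x] x ∈ H ∧ ∀ j, 1 ≤ j → j < k x → f^[j] x ∉ H)
    (m : ℕ) (a : ℕ → ℕ) (ha0 : a 0 = 0) (haTop : a (2*m+1) = r/2)
    (hsize : ∀ i ≤ 2*m, a (i+1) = a i + s ∨ a (i+1) = a i + s + 1)
    (c : X → ℕ) (hc01 : ∀ x, c x = 0 ∨ c x = 1)
    (hcBig : ∀ x, r/2 ≤ k x → c x = (k x / s) % 2)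
    (hcT0 : ∀ x, k x < r/2 → c (f^[k x] x) = 0 → c x = (k x / s) % 2)
    (hcT1 : ∀ x, k x < r/2 → c (f^[k x] x) = 1 →
      ∀ i ≤ 2*m, a i ≤ k x → k x < a (i+1) → c x = (i+1) % 2)
    (L : X → ℕ)
    (hL : ∀ x, 1 ≤ L x ∧ c (f^[L x] x) ≠ c x ∧ ∀ j, 1 ≤ j → j < L x → c (f^[j] x) = c x) :
    ∀ i ≤ 1, ∀ x y : X, c x = i →
      Relation.EqvGen (classRel f t {z | c z = i}) x y →
      ∃ k' : ℕ, f^[k'] y = f^[2*t + L x] x := by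
  have hk' (x : X) : IsLeast {j | 1 ≤ j ∧ f^[j] x ∈ H} (k x) :=
    isLeast_of_forall_lt (hk x).1 (hk x).2.1 (hk x).2.2
  have hL' (x : X) : IsLeast {j | 1 ≤ j ∧ c (f^[j] x) ≠ c x} (L x) :=
    isLeast_of_forall_lt (hL x).1 (hL x).2.1 fun j h1 h2 => not_not.mpr ((hL x).2.2 j h1 h2)
  have hc : IsBlockColoring f k s r m a c :=
    ⟨ha0, haTop, fun i hi => by rcases hsize i hi with h | h <;> omega, hc01, hcBig, hcT0, hcT1⟩
  have hsr : s ∣ r / 2 := ⟨2 * s, by rw [hrr]; ring_nf; omega⟩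
  intro i _ x y _ hxy
  have hmerge (u v : X) (huv : classRel f t {z | c z = i} u v) :
      f^[2 * t + L u] u = f^[2 * t + L v] v := by
    obtain ⟨hu, hv, hdist⟩ := huv
    obtain ⟨p, q, hpq, heq⟩ := hdist.exists_iterate_eq
    exact iterate_add_flipTime_eq_of_iterate_eq hk' hc hsr hL' (hu.trans hv.symm) heq (by omega)
      (by omega)
  exact ⟨2 * t + L y,
    ((Equivalence.eqvGen_iff (InvImage.equivalence _ _ eq_equivalence)).mp (hxy.mono hmerge)).symm⟩

theorem stmt19 {X : Type*} (f : X → X) (hf : Acyclic f) (t : ℕ) (ht : 1 ≤ t)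
    (s r : ℕ) (hs : s = 6*t) (hrr : r = 4*s^2)
    (H : Set X) (hHit : Hitting f H) (hInd : FwdIndep f r H)
    (k : X → ℕ)
    (hk : ∀ x, 1 ≤ k x ∧ f^[k x] x ∈ H ∧ ∀ j, 1 ≤ j → j < k x → f^[j] x ∉ H)
    (m : ℕ) (a : ℕ → ℕ) (ha0 : a 0 = 0) (haTop : a (2*m+1) = r/2)
    (hsize : ∀ i ≤ 2*m, a (i+1) = a i + s ∨ a (i+1) = a i + s + 1)
    (c : X → ℕ) (hc01 : ∀ x, c x = 0 ∨ c x = 1)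
    (hcBig : ∀ x, r/2 ≤ k x → c x = (k x / s) % 2)
    (hcT0 : ∀ x, k x < r/2 → c (f^[k x] x) = 0 → c x = (k x / s) % 2)
    (hcT1 : ∀ x, k x < r/2 → c (f^[k x] x) = 1 →
      ∀ i ≤ 2*m, a i ≤ k x → k x < a (i+1) → c x = (i+1) % 2)
    (L : X → ℕ)
    (hL : ∀ x, 1 ≤ L x ∧ c (f^[L x] x) ≠ c x ∧ ∀ j, 1 ≤ j → j < L x → c (f^[j] x) = c x) :
    ∀ i ≤ 1, ∀ x y : X, c x = i →
      Relation.EqvGen (classRel f t {z | c z = i}) x y →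
      ∃ k' : ℕ, f^[k'] y = f^[2*t + L x] x :=
  stmt19_general f t ht s r hs hrr H k hk m a ha0 haTop hsize c hc01 hcBig hcT0 hcT1 L hL
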